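/- arXiv:2112.14011 — 8 statements merged into one kernel-verified Lean document; each statement's English description precedes it below -/
import Mathlib

section
/- Let h11, h12, h21, h22 > 0 and define f : ℝ² → ℝ by f(p1, p2) = −log(1 + h11²·p1/(h12²·p2 + 1)) − log(1 + h22²·p2/(h21²·p1 + 1)). If 0 ≤ p1 ≤ 1, 0 ≤ p2 ≤ 1, and p2 < h11² / ((h11² + h12² + 1)·h21²·h22²), then the partial derivative of f with respect to p1 at (p1, p2) is strictly negative. -/
/-- Per-snapshot unsupervised loss (negative sum rate) of a two-user interference
channel with unit noise power. -/
noncomputable def ulLoss (h11 h12 h21 h22 p1 p2 : ℝ) : ℝ :=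
  -Real.log (1 + h11 ^ 2 * p1 / (h12 ^ 2 * p2 + 1))
    - Real.log (1 + h22 ^ 2 * p2 / (h21 ^ 2 * p1 + 1))

/-- If `0 ≤ p1 ≤ 1`, `0 ≤ p2 ≤ 1` and `p2 < h11² / ((h11² + h12² + 1)·h21²·h22²)`,
then the partial derivative of the loss with respect to `p1` is strictly negative. -/
theorem stmt3 (h11 h12 h21 h22 : ℝ)
    (h11pos : 0 < h11) (h12pos : 0 < h12) (h21pos : 0 < h21) (h22pos : 0 < h22)
    (p1 p2 : ℝ) (hp1l : 0 ≤ p1) (hp1u : p1 ≤ 1) (hp2l : 0 ≤ p2) (hp2u : p2 ≤ 1)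
    (hp2 : p2 < h11 ^ 2 / ((h11 ^ 2 + h12 ^ 2 + 1) * h21 ^ 2 * h22 ^ 2)) :
    deriv (fun t => ulLoss h11 h12 h21 h22 t p2) p1 < 0 := by
  have hD : (0:ℝ) < h12 ^ 2 * p2 + 1 := by positivity
  have hB : (0:ℝ) < h21 ^ 2 * p1 + 1 := by positivity
  have hB1 : (1:ℝ) ≤ h21 ^ 2 * p1 + 1 := by nlinarith [sq_nonneg h21]
  have hU1 : (1:ℝ) ≤ 1 + h11 ^ 2 * p1 / (h12 ^ 2 * p2 + 1) := by
    have : (0:ℝ) ≤ h11 ^ 2 * p1 / (h12 ^ 2 * p2 + 1) := by positivity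
    linarith
  have hV1 : (1:ℝ) ≤ 1 + h22 ^ 2 * p2 / (h21 ^ 2 * p1 + 1) := by
    have : (0:ℝ) ≤ h22 ^ 2 * p2 / (h21 ^ 2 * p1 + 1) := by positivity
    linarith
  have hUpos : (0:ℝ) < 1 + h11 ^ 2 * p1 / (h12 ^ 2 * p2 + 1) := by linarith
  have hVpos : (0:ℝ) < 1 + h22 ^ 2 * p2 / (h21 ^ 2 * p1 + 1) := by linarith
  have hu : HasDerivAt (fun t : ℝ => 1 + h11 ^ 2 * t / (h12 ^ 2 * p2 + 1))
      (h11 ^ 2 / (h12 ^ 2 * p2 + 1)) p1 := by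
    have := (((hasDerivAt_id p1).const_mul (h11 ^ 2)).div_const (h12 ^ 2 * p2 + 1)).const_add 1
    simpa using this
  have hv : HasDerivAt (fun t : ℝ => 1 + h22 ^ 2 * p2 / (h21 ^ 2 * t + 1))
      ((0 * (h21 ^ 2 * p1 + 1) - h22 ^ 2 * p2 * h21 ^ 2) / (h21 ^ 2 * p1 + 1) ^ 2) p1 := by
    have hd : HasDerivAt (fun t : ℝ => h21 ^ 2 * t + 1) (h21 ^ 2) p1 := by
      have := ((hasDerivAt_id p1).const_mul (h21 ^ 2)).add_const 1
      simpa using this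
    have := ((hasDerivAt_const p1 (h22 ^ 2 * p2)).div hd hB.ne').const_add 1
    simpa using this
  have hf : HasDerivAt (fun t => ulLoss h11 h12 h21 h22 t p2)
      (-(h11 ^ 2 / (h12 ^ 2 * p2 + 1) / (1 + h11 ^ 2 * p1 / (h12 ^ 2 * p2 + 1)))
        - (0 * (h21 ^ 2 * p1 + 1) - h22 ^ 2 * p2 * h21 ^ 2) / (h21 ^ 2 * p1 + 1) ^ 2
          / (1 + h22 ^ 2 * p2 / (h21 ^ 2 * p1 + 1))) p1 :=
    ((hu.log hUpos.ne').neg).sub (hv.log hVpos.ne')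
  rw [hf.deriv]
  have hBVpos : (0:ℝ) < (h21 ^ 2 * p1 + 1) ^ 2 * (1 + h22 ^ 2 * p2 / (h21 ^ 2 * p1 + 1)) := by
    positivity
  have hfinal :
      (0 * (h21 ^ 2 * p1 + 1) - h22 ^ 2 * p2 * h21 ^ 2) / (h21 ^ 2 * p1 + 1) ^ 2
          / (1 + h22 ^ 2 * p2 / (h21 ^ 2 * p1 + 1))
        = -(h22 ^ 2 * p2 * h21 ^ 2
            / ((h21 ^ 2 * p1 + 1) ^ 2 * (1 + h22 ^ 2 * p2 / (h21 ^ 2 * p1 + 1)))) := by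
    field_simp
    ring
  rw [hfinal]
  have key1 : h22 ^ 2 * p2 * h21 ^ 2
      / ((h21 ^ 2 * p1 + 1) ^ 2 * (1 + h22 ^ 2 * p2 / (h21 ^ 2 * p1 + 1)))
      ≤ h22 ^ 2 * p2 * h21 ^ 2 := by
    apply div_le_self (by positivity)
    nlinarith [hB1, hV1]
  have key2 : h22 ^ 2 * p2 * h21 ^ 2 < h11 ^ 2 / (h11 ^ 2 + h12 ^ 2 + 1) := by
    have hden : (0:ℝ) < (h11 ^ 2 + h12 ^ 2 + 1) * h21 ^ 2 * h22 ^ 2 := by positivity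
    rw [lt_div_iff₀ hden] at hp2
    rw [lt_div_iff₀ (by positivity : (0:ℝ) < h11 ^ 2 + h12 ^ 2 + 1)]
    nlinarith [hp2]
  have key3 : h11 ^ 2 / (h11 ^ 2 + h12 ^ 2 + 1)
      ≤ h11 ^ 2 / (h12 ^ 2 * p2 + 1) / (1 + h11 ^ 2 * p1 / (h12 ^ 2 * p2 + 1)) := by
    have hEq : h11 ^ 2 / (h12 ^ 2 * p2 + 1) / (1 + h11 ^ 2 * p1 / (h12 ^ 2 * p2 + 1))
        = h11 ^ 2 / (h12 ^ 2 * p2 + 1 + h11 ^ 2 * p1) := by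
      rw [div_div]
      congr 1
      field_simp
    rw [hEq]
    apply div_le_div_of_nonneg_left (by positivity) (by positivity)
    nlinarith [sq_nonneg h11, sq_nonneg h12]
  linarith
end

section
/- Let h11, h12, h21, h22 > 0 and define f : ℝ² → ℝ by f(p1, p2) = −log(1 + h11²·p1/(h12²·p2 + 1)) − log(1 + h22²·p2/(h21²·p1 + 1)). If 2·(h11² + 2)·h22² / (h11²·h12²) < p1 ≤ 1 and 0 ≤ p2 < 1/h12², then the partial derivative of f with respect to p2 at (p1, p2) is strictly positive. -/
set_option maxHeartbeats 1000000 in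
/-- If `2·(h11² + 2)·h22² / (h11²·h12²) < p1 ≤ 1` and `0 ≤ p2 < 1/h12²`, then the partial
derivative of the loss with respect to `p2` is strictly positive. -/
theorem stmt4 (h11 h12 h21 h22 : ℝ)
    (h11pos : 0 < h11) (h12pos : 0 < h12) (h21pos : 0 < h21) (h22pos : 0 < h22)
    (p1 p2 : ℝ)
    (hp1l : 2 * (h11 ^ 2 + 2) * h22 ^ 2 / (h11 ^ 2 * h12 ^ 2) < p1) (hp1u : p1 ≤ 1)
    (hp2l : 0 ≤ p2) (hp2u : p2 < 1 / h12 ^ 2) :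
    0 < deriv (fun t => ulLoss h11 h12 h21 h22 p1 t) p2 := by
  have ha : (0:ℝ) < h11 ^ 2 := by positivity
  have hb : (0:ℝ) < h12 ^ 2 := by positivity
  have hc : (0:ℝ) < h22 ^ 2 := by positivity
  have hd : (0:ℝ) < h21 ^ 2 := by positivity
  have hp1pos : 0 < p1 := lt_of_le_of_lt (by positivity) hp1l
  have hx : 0 < h12 ^ 2 * p2 + 1 := by nlinarith [mul_nonneg hb.le hp2l]
  have hy : 0 < h12 ^ 2 * p2 + 1 + h11 ^ 2 * p1 := by nlinarith [mul_pos ha hp1pos]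
  have hz : 0 < h21 ^ 2 * p1 + 1 + h22 ^ 2 * p2 := by
    nlinarith [mul_pos hd hp1pos, mul_nonneg hc.le hp2l]
  have hzc : 0 < h21 ^ 2 * p1 + 1 := by nlinarith [mul_pos hd hp1pos]
  -- eventual equality with a nicer expression
  have h1 : -(1 / h12 ^ 2) < p2 := by
    have : (0:ℝ) < 1 / h12 ^ 2 := by positivity
    linarith
  have h2 : -((h21 ^ 2 * p1 + 1) / h22 ^ 2) < p2 := by
    have : (0:ℝ) < (h21 ^ 2 * p1 + 1) / h22 ^ 2 := by positivity
    linarith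
  have heq : (fun t => ulLoss h11 h12 h21 h22 p1 t) =ᶠ[nhds p2]
      (fun t => Real.log (h12 ^ 2 * t + 1) - Real.log (h12 ^ 2 * t + 1 + h11 ^ 2 * p1)
        + (Real.log (h21 ^ 2 * p1 + 1) - Real.log (h21 ^ 2 * p1 + 1 + h22 ^ 2 * t))) := by
    filter_upwards [Ioi_mem_nhds h1, Ioi_mem_nhds h2] with t ht1 ht2
    have hbt : 0 < h12 ^ 2 * t + 1 := by
      have e : h12 ^ 2 * (-(1 / h12 ^ 2)) = -1 := by field_simp
      nlinarith [mul_lt_mul_of_pos_left ht1 hb]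
    have hct : 0 < h21 ^ 2 * p1 + 1 + h22 ^ 2 * t := by
      have e : h22 ^ 2 * (-((h21 ^ 2 * p1 + 1) / h22 ^ 2)) = -(h21 ^ 2 * p1 + 1) := by
        field_simp
      nlinarith [mul_lt_mul_of_pos_left ht2 hc]
    unfold ulLoss
    rw [show 1 + h11 ^ 2 * p1 / (h12 ^ 2 * t + 1)
        = (h12 ^ 2 * t + 1 + h11 ^ 2 * p1) / (h12 ^ 2 * t + 1) by field_simp]
    rw [show 1 + h22 ^ 2 * t / (h21 ^ 2 * p1 + 1)
        = (h21 ^ 2 * p1 + 1 + h22 ^ 2 * t) / (h21 ^ 2 * p1 + 1) by field_simp]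
    rw [Real.log_div (by positivity) hbt.ne', Real.log_div hct.ne' hzc.ne']
    ring
  rw [heq.deriv_eq]
  -- derivative of the nice expression
  have hd0 : HasDerivAt (fun t : ℝ => h12 ^ 2 * t + 1) (h12 ^ 2) p2 := by
    simpa using ((hasDerivAt_id p2).const_mul (h12 ^ 2)).add_const 1
  have hl1 := hd0.log hx.ne'
  have hl2 := (hd0.add_const (h11 ^ 2 * p1)).log hy.ne'
  have hd3 : HasDerivAt (fun t : ℝ => h21 ^ 2 * p1 + 1 + h22 ^ 2 * t) (h22 ^ 2) p2 := by
    simpa using ((hasDerivAt_id p2).const_mul (h22 ^ 2)).const_add (h21 ^ 2 * p1 + 1)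
  have hl3 := hd3.log hz.ne'
  have total := (hl1.sub hl2).add ((hasDerivAt_const p2 (Real.log (h21 ^ 2 * p1 + 1))).sub hl3)
  rw [(show HasDerivAt (fun t => Real.log (h12 ^ 2 * t + 1) - Real.log (h12 ^ 2 * t + 1 + h11 ^ 2 * p1)
      + (Real.log (h21 ^ 2 * p1 + 1) - Real.log (h21 ^ 2 * p1 + 1 + h22 ^ 2 * t))) _ p2 from total).deriv]
  -- positivity of the derivative value
  have hkey : 2 * (h11 ^ 2 + 2) * h22 ^ 2 < p1 * (h11 ^ 2 * h12 ^ 2) :=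
    (div_lt_iff₀ (by positivity)).mp hp1l
  have hx2 : h12 ^ 2 * p2 + 1 < 2 := by
    have e : h12 ^ 2 * (1 / h12 ^ 2) = 1 := by field_simp
    nlinarith [mul_lt_mul_of_pos_left hp2u hb]
  have hy2 : h12 ^ 2 * p2 + 1 + h11 ^ 2 * p1 < 2 + h11 ^ 2 := by
    nlinarith [mul_le_mul_of_nonneg_left hp1u ha.le]
  have hz1 : 1 ≤ h21 ^ 2 * p1 + 1 + h22 ^ 2 * p2 := by
    nlinarith [mul_pos hd hp1pos, mul_nonneg hc.le hp2l]
  have hstep1 : h22 ^ 2 / (h21 ^ 2 * p1 + 1 + h22 ^ 2 * p2) ≤ h22 ^ 2 :=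
    div_le_self hc.le hz1
  have hstep2 : h22 ^ 2 < h12 ^ 2 / (h12 ^ 2 * p2 + 1)
      - h12 ^ 2 / (h12 ^ 2 * p2 + 1 + h11 ^ 2 * p1) := by
    rw [div_sub_div _ _ hx.ne' hy.ne', lt_div_iff₀ (mul_pos hx hy)]
    have w1 : (h12 ^ 2 * p2 + 1) * (h12 ^ 2 * p2 + 1 + h11 ^ 2 * p1)
        < (h12 ^ 2 * p2 + 1) * (2 + h11 ^ 2) := mul_lt_mul_of_pos_left hy2 hx
    have w2 : (h12 ^ 2 * p2 + 1) * (2 + h11 ^ 2) < 2 * (2 + h11 ^ 2) :=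
      mul_lt_mul_of_pos_right hx2 (by positivity)
    have w3 := mul_lt_mul_of_pos_left (w1.trans w2) hc
    have e : h12 ^ 2 * (h12 ^ 2 * p2 + 1 + h11 ^ 2 * p1)
        - h12 ^ 2 * (h12 ^ 2 * p2 + 1) = p1 * (h11 ^ 2 * h12 ^ 2) := by ring
    nlinarith [w3, hkey, e]
  linarith
end

section
/- For n = 1, 2, let h11^{(n)}, h12^{(n)}, h21^{(n)}, h22^{(n)} > 0 satisfy 2·((h11^{(n)})² + 2)·(h22^{(n)})² < (h11^{(n)})²·(h12^{(n)})², and let f^{(n)}(p1, p2) = −log(1 + (h11^{(n)})²·p1/((h12^{(n)})²·p2 + 1)) − log(1 + (h22^{(n)})²·p2/((h21^{(n)})²·p1 + 1)). Define F : ℝ^4 → ℝ by F(p1^{(1)}, p2^{(1)}, p1^{(2)}, p2^{(2)}) = f^{(1)}(p1^{(1)}, p2^{(1)}) + f^{(2)}(p1^{(2)}, p2^{(2)}). Then P* = (1, 0, 1, 0) is a strict local minimum of F on the box [0,1]^4: there exists ε > 0 such that F(P*) < F(P) for every P ∈ [0,1]^4 with 0 < ‖P − P*‖ ≤ ε. 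-/
/-- The power allocation `P* = (1, 0, 1, 0)`. -/
noncomputable def Pstar : EuclideanSpace ℝ (Fin 4) := WithLp.toLp 2 ![1, 0, 1, 0]

private lemma coord_le (x : EuclideanSpace ℝ (Fin 4)) (i : Fin 4) : |x i| ≤ ‖x‖ := by
  rw [EuclideanSpace.norm_eq, ← Real.sqrt_sq_eq_abs]
  apply Real.sqrt_le_sqrt
  have := Finset.single_le_sum (f := fun j => ‖x j‖ ^ 2) (fun j _ => sq_nonneg _)
    (Finset.mem_univ i)
  simpa [Real.norm_eq_abs, sq_abs] using this

private lemma poly_key (a b c d u t : ℝ) (ha : 0 < a) (hb : 0 < b) (hc : 0 < c) (hd : 0 < d)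
    (hstr : 2 * (a + 2) * d < a * b) (hu : u ≤ 1) (ht0 : 0 ≤ t)
    (hbt : b * t ≤ 1 / 2) (hcs : c * (1 - u) ≤ 1 / 2) (hne : u < 1 ∨ 0 < t) :
    (b * t + 1 + a * u) * (c * u + 1 + d * t) < (1 + a) * (b * t + 1) * (c * u + 1) := by
  obtain ⟨s, hsdef⟩ : ∃ s : ℝ, s = 1 - u := ⟨_, rfl⟩
  have hs0 : 0 ≤ s := by rw [hsdef]; linarith
  rw [show (1:ℝ) - u = s from hsdef.symm] at hcs
  have hkey : (1 + a) * (b * t + 1) * (c * u + 1) - (b * t + 1 + a * u) * (c * u + 1 + d * t)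
      = t * (a * b * (c + 1) - (b * t + 1 + a) * d) + s * (a * (c + 1) + a * t * (d - b * c))
        - a * c * s ^ 2 := by
    rw [hsdef]; ring
  have hA : (a * b / 2) * t ≤ t * (a * b * (c + 1) - (b * t + 1 + a) * d) := by
    have h1 : a * b / 2 ≤ a * b * (c + 1) - (b * t + 1 + a) * d := by
      nlinarith [mul_pos (mul_pos ha hb) hc, mul_nonneg (le_of_lt hd) ht0,
        mul_nonneg (mul_nonneg (le_of_lt hd) ht0) (le_of_lt hb)]
    nlinarith [mul_le_mul_of_nonneg_left h1 ht0]
  have hB : a * s ≤ s * (a * (c + 1) + a * t * (d - b * c)) := by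
    have h1 : a ≤ a * (c + 1) + a * t * (d - b * c) := by
      nlinarith [mul_pos ha hc, mul_nonneg (le_of_lt ha) (mul_nonneg (le_of_lt hd) ht0),
        mul_le_mul_of_nonneg_left hbt (mul_nonneg ha.le hc.le)]
    nlinarith [mul_le_mul_of_nonneg_left h1 hs0]
  have hC : a * c * s ^ 2 ≤ (a / 2) * s := by
    nlinarith [mul_le_mul_of_nonneg_left hcs (mul_nonneg (le_of_lt ha) hs0)]
  have hpos : 0 < (a * b / 2) * t + a * s - (a / 2) * s := by
    rcases hne with h | h
    · have hs : 0 < s := by simp [hsdef]; linarith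
      have : 0 ≤ (a * b / 2) * t := by positivity
      nlinarith
    · have : 0 ≤ a * s - (a / 2) * s := by nlinarith
      nlinarith [mul_pos (by positivity : (0:ℝ) < a * b / 2) h]
  have hfin : 0 < (1 + a) * (b * t + 1) * (c * u + 1)
      - (b * t + 1 + a * u) * (c * u + 1 + d * t) := by rw [hkey]; linarith
  linarith

/-- Strict per-snapshot inequality near (1,0). -/
private lemma snap_strict (h11 h12 h21 h22 p1 p2 : ℝ)
    (H11 : 0 < h11) (H12 : 0 < h12) (H21 : 0 < h21) (H22 : 0 < h22)
    (hstr : 2 * (h11 ^ 2 + 2) * h22 ^ 2 < h11 ^ 2 * h12 ^ 2)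
    (hp10 : 0 ≤ p1) (hp11 : p1 ≤ 1) (hp20 : 0 ≤ p2)
    (hbt : h12 ^ 2 * p2 ≤ 1 / 2) (hcs : h21 ^ 2 * (1 - p1) ≤ 1 / 2)
    (hne : p1 < 1 ∨ 0 < p2) :
    ulLoss h11 h12 h21 h22 1 0 < ulLoss h11 h12 h21 h22 p1 p2 := by
  set a := h11 ^ 2 with hadef
  set b := h12 ^ 2 with hbdef
  set c := h21 ^ 2 with hcdef
  set d := h22 ^ 2 with hddef
  have ha : 0 < a := by positivity
  have hb : 0 < b := by positivity
  have hc : 0 < c := by positivity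
  have hd : 0 < d := by positivity
  have hD1 : 0 < b * p2 + 1 := by nlinarith
  have hD2 : 0 < c * p1 + 1 := by nlinarith
  have hkey := poly_key a b c d p1 p2 ha hb hc hd hstr hp11 hp20 hbt hcs hne
  have hA : (1 : ℝ) + a * p1 / (b * p2 + 1) = (b * p2 + 1 + a * p1) / (b * p2 + 1) := by
    field_simp
  have hB : (1 : ℝ) + d * p2 / (c * p1 + 1) = (c * p1 + 1 + d * p2) / (c * p1 + 1) := by
    field_simp
  have hApos : 0 < (1 : ℝ) + a * p1 / (b * p2 + 1) := by positivity
  have hBpos : 0 < (1 : ℝ) + d * p2 / (c * p1 + 1) := by positivity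
  have hprod : ((1 : ℝ) + a * p1 / (b * p2 + 1)) * (1 + d * p2 / (c * p1 + 1)) < 1 + a := by
    rw [hA, hB, div_mul_div_comm, div_lt_iff₀ (by positivity)]
    calc (b * p2 + 1 + a * p1) * (c * p1 + 1 + d * p2)
        < (1 + a) * (b * p2 + 1) * (c * p1 + 1) := by nlinarith [hkey]
      _ = (1 + a) * ((b * p2 + 1) * (c * p1 + 1)) := by ring
  have hlog : Real.log ((1 + a * p1 / (b * p2 + 1)) * (1 + d * p2 / (c * p1 + 1)))
      < Real.log (1 + a) := Real.log_lt_log (by positivity) hprod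
  rw [Real.log_mul (ne_of_gt hApos) (ne_of_gt hBpos)] at hlog
  have hL : ulLoss h11 h12 h21 h22 1 0 = -Real.log (1 + a) := by
    simp [ulLoss, ← hadef, ← hcdef]
  rw [hL]
  show -Real.log (1 + a) < -Real.log (1 + a * p1 / (b * p2 + 1))
      - Real.log (1 + d * p2 / (c * p1 + 1))
  linarith

private lemma snap_le (h11 h12 h21 h22 p1 p2 : ℝ)
    (H11 : 0 < h11) (H12 : 0 < h12) (H21 : 0 < h21) (H22 : 0 < h22)
    (hstr : 2 * (h11 ^ 2 + 2) * h22 ^ 2 < h11 ^ 2 * h12 ^ 2)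
    (hp10 : 0 ≤ p1) (hp11 : p1 ≤ 1) (hp20 : 0 ≤ p2)
    (hbt : h12 ^ 2 * p2 ≤ 1 / 2) (hcs : h21 ^ 2 * (1 - p1) ≤ 1 / 2) :
    ulLoss h11 h12 h21 h22 1 0 ≤ ulLoss h11 h12 h21 h22 p1 p2 := by
  rcases eq_or_lt_of_le hp11 with h1 | h1
  · rcases eq_or_lt_of_le hp20 with h2 | h2
    · subst h1; rw [← h2]
    · exact le_of_lt (snap_strict h11 h12 h21 h22 p1 p2 H11 H12 H21 H22 hstr hp10 hp11
        hp20 hbt hcs (Or.inr h2))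
  · exact le_of_lt (snap_strict h11 h12 h21 h22 p1 p2 H11 H12 H21 H22 hstr hp10 hp11
      hp20 hbt hcs (Or.inl h1))

/-- Under the strong-interference condition `2·(h11² + 2)·h22² < h11²·h12²` for both
snapshots, `P* = (1,0,1,0)` is a strict local minimum of the two-snapshot unsupervised
training loss on the box `[0,1]⁴`. -/
theorem stmt6 (h11 h12 h21 h22 : Fin 2 → ℝ)
    (hpos : ∀ n, 0 < h11 n ∧ 0 < h12 n ∧ 0 < h21 n ∧ 0 < h22 n)
    (hstrong : ∀ n, 2 * ((h11 n) ^ 2 + 2) * (h22 n) ^ 2 < (h11 n) ^ 2 * (h12 n) ^ 2) :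
    ∃ ε > 0, ∀ P : EuclideanSpace ℝ (Fin 4),
      (∀ i, 0 ≤ P i ∧ P i ≤ 1) →
      0 < ‖P - Pstar‖ → ‖P - Pstar‖ ≤ ε →
      ulLoss (h11 0) (h12 0) (h21 0) (h22 0) (Pstar 0) (Pstar 1)
          + ulLoss (h11 1) (h12 1) (h21 1) (h22 1) (Pstar 2) (Pstar 3)
        < ulLoss (h11 0) (h12 0) (h21 0) (h22 0) (P 0) (P 1)
          + ulLoss (h11 1) (h12 1) (h21 1) (h22 1) (P 2) (P 3) := by
  obtain ⟨H11a, H12a, H21a, H22a⟩ := hpos 0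
  obtain ⟨H11b, H12b, H21b, H22b⟩ := hpos 1
  set M : ℝ := max (max ((h12 0) ^ 2) ((h21 0) ^ 2)) (max ((h12 1) ^ 2) ((h21 1) ^ 2))
    with hMdef
  have hM : 0 < M := lt_of_lt_of_le (by positivity : (0:ℝ) < (h12 0) ^ 2)
    (le_max_of_le_left (le_max_left _ _))
  refine ⟨1 / (2 * M), by positivity, fun P hbox hne hle => ?_⟩
  have hP0 := hbox 0; have hP1 := hbox 1; have hP2 := hbox 2; have hP3 := hbox 3
  have hPs0 : Pstar 0 = 1 := rfl
  have hPs1 : Pstar 1 = 0 := rfl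
  have hPs2 : Pstar 2 = 1 := rfl
  have hPs3 : Pstar 3 = 0 := rfl
  have hcoord : ∀ i : Fin 4, |P i - Pstar i| ≤ 1 / (2 * M) := by
    intro i
    have := coord_le (P - Pstar) i
    simpa using this.trans hle
  -- coordinate bounds
  have hE : ∀ i : Fin 4, ∀ e : ℝ, 0 < e → e ≤ M → |P i - Pstar i| * e ≤ 1 / 2 := by
    intro i e he heM
    calc |P i - Pstar i| * e ≤ (1 / (2 * M)) * M :=
          mul_le_mul (hcoord i) heM he.le (by positivity)
      _ = 1 / 2 := by field_simp
  have hb1M : (h12 0) ^ 2 ≤ M := le_max_of_le_left (le_max_left _ _)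
  have hc1M : (h21 0) ^ 2 ≤ M := le_max_of_le_left (le_max_right _ _)
  have hb2M : (h12 1) ^ 2 ≤ M := le_max_of_le_right (le_max_left _ _)
  have hc2M : (h21 1) ^ 2 ≤ M := le_max_of_le_right (le_max_right _ _)
  -- per-snapshot hypotheses
  have hbt1 : (h12 0) ^ 2 * P 1 ≤ 1 / 2 := by
    have := hE 1 ((h12 0) ^ 2) (by positivity) hb1M
    rw [hPs1] at this
    calc (h12 0) ^ 2 * P 1 = |P 1 - 0| * (h12 0) ^ 2 := by
          rw [abs_of_nonneg (by linarith [hP1.1] : (0:ℝ) ≤ P 1 - 0)]; ring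
      _ ≤ 1 / 2 := this
  have hcs1 : (h21 0) ^ 2 * (1 - P 0) ≤ 1 / 2 := by
    have := hE 0 ((h21 0) ^ 2) (by positivity) hc1M
    rw [hPs0] at this
    calc (h21 0) ^ 2 * (1 - P 0) = |P 0 - 1| * (h21 0) ^ 2 := by
          rw [abs_of_nonpos (by linarith [hP0.2] : P 0 - 1 ≤ 0)]; ring
      _ ≤ 1 / 2 := this
  have hbt2 : (h12 1) ^ 2 * P 3 ≤ 1 / 2 := by
    have := hE 3 ((h12 1) ^ 2) (by positivity) hb2M
    rw [hPs3] at this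
    calc (h12 1) ^ 2 * P 3 = |P 3 - 0| * (h12 1) ^ 2 := by
          rw [abs_of_nonneg (by linarith [hP3.1] : (0:ℝ) ≤ P 3 - 0)]; ring
      _ ≤ 1 / 2 := this
  have hcs2 : (h21 1) ^ 2 * (1 - P 2) ≤ 1 / 2 := by
    have := hE 2 ((h21 1) ^ 2) (by positivity) hc2M
    rw [hPs2] at this
    calc (h21 1) ^ 2 * (1 - P 2) = |P 2 - 1| * (h21 1) ^ 2 := by
          rw [abs_of_nonpos (by linarith [hP2.2] : P 2 - 1 ≤ 0)]; ring
      _ ≤ 1 / 2 := this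
  -- some coordinate differs
  have hPne : P ≠ Pstar := by
    intro h; rw [h] at hne; simp at hne
  have hdiff : (P 0 < 1 ∨ 0 < P 1) ∨ (P 2 < 1 ∨ 0 < P 3) := by
    by_contra h
    push_neg at h
    obtain ⟨⟨h0, h1⟩, h2, h3⟩ := h
    apply hPne
    ext i
    fin_cases i
    · exact le_antisymm hP0.2 h0
    · exact le_antisymm h1 hP1.1
    · exact le_antisymm hP2.2 h2
    · exact le_antisymm h3 hP3.1
  rw [hPs0, hPs1, hPs2, hPs3]
  rcases hdiff with h | h
  · have hs := snap_strict (h11 0) (h12 0) (h21 0) (h22 0) (P 0) (P 1)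
      H11a H12a H21a H22a (hstrong 0) hP0.1 hP0.2 hP1.1 hbt1 hcs1 h
    have hl := snap_le (h11 1) (h12 1) (h21 1) (h22 1) (P 2) (P 3)
      H11b H12b H21b H22b (hstrong 1) hP2.1 hP2.2 hP3.1 hbt2 hcs2
    linarith
  · have hs := snap_strict (h11 1) (h12 1) (h21 1) (h22 1) (P 2) (P 3)
      H11b H12b H21b H22b (hstrong 1) hP2.1 hP2.2 hP3.1 hbt2 hcs2 h
    have hl := snap_le (h11 0) (h12 0) (h21 0) (h22 0) (P 0) (P 1)
      H11a H12a H21a H22a (hstrong 0) hP0.1 hP0.2 hP1.1 hbt1 hcs1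
    linarith
end

section
/- For n = 1, 2, let h^{(n)} = (h11^{(n)}, h12^{(n)}, h21^{(n)}, h22^{(n)}) ∈ ℝ^4 have positive entries satisfying 2·((h11^{(n)})² + 2)·(h22^{(n)})² < (h11^{(n)})²·(h12^{(n)})². Define the one-layer linear-network unsupervised training loss f_ul(Θ) = f^{(1)}(Θ·h^{(1)}) + f^{(2)}(Θ·h^{(2)}) for Θ ∈ ℝ^{2×4}, where f^{(n)}(p1, p2) = −log(1 + (h11^{(n)})²·p1/((h12^{(n)})²·p2 + 1)) − log(1 + (h22^{(n)})²·p2/((h21^{(n)})²·p1 + 1)), with feasible set D = {Θ ∈ ℝ^{2×4} : Θ·h^{(n)} ∈ [0,1]² for n = 1, 2}. Then every Θ̃ ∈ ℝ^{2×4} with Θ̃·h^{(1)} = Θ̃·h^{(2)} = (1, 0) is a local minimum of f_ul on D: there exists δ > 0 such that f_ul(Θ) ≥ f_ul(Θ̃) for all Θ ∈ D with ‖Θ − Θ̃‖ ≤ δ. -/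
attribute [local instance] Matrix.frobeniusNormedAddCommGroup

/-- Unsupervised training loss of a one-layer linear network on two channel snapshots
`h n = (h11⁽ⁿ⁾, h12⁽ⁿ⁾, h21⁽ⁿ⁾, h22⁽ⁿ⁾) ∈ ℝ⁴`, `n = 0, 1`. -/
noncomputable def fUL (h : Fin 2 → Fin 4 → ℝ) (Θ : Matrix (Fin 2) (Fin 4) ℝ) : ℝ :=
  ulLoss (h 0 0) (h 0 1) (h 0 2) (h 0 3) (Θ.mulVec (h 0) 0) (Θ.mulVec (h 0) 1)
    + ulLoss (h 1 0) (h 1 1) (h 1 2) (h 1 3) (Θ.mulVec (h 1) 0) (Θ.mulVec (h 1) 1)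

lemma entry_le_frob (A : Matrix (Fin 2) (Fin 4) ℝ) (i : Fin 2) (j : Fin 4) :
    |A i j| ≤ ‖A‖ := by
  rw [Matrix.frobenius_norm_def]
  have h1 : |A i j| = Real.sqrt (|A i j| ^ 2) := by
    rw [Real.sqrt_sq_eq_abs, abs_abs]
  have h2 : ((∑ i, ∑ j, ‖A i j‖ ^ (2 : ℝ)) : ℝ) ^ (1/2 : ℝ)
      = Real.sqrt (∑ i, ∑ j, ‖A i j‖ ^ (2 : ℝ)) := by
    rw [Real.sqrt_eq_rpow]
  rw [h1, h2]
  apply Real.sqrt_le_sqrt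
  have h3 : |A i j| ^ 2 = ‖A i j‖ ^ (2 : ℝ) := by
    rw [Real.rpow_two]; rfl
  rw [h3]
  calc ‖A i j‖ ^ (2:ℝ) ≤ ∑ j', ‖A i j'‖ ^ (2:ℝ) := by
        apply Finset.single_le_sum (f := fun j' => ‖A i j'‖ ^ (2:ℝ))
        · intro k _; positivity
        · exact Finset.mem_univ j
    _ ≤ ∑ i', ∑ j', ‖A i' j'‖ ^ (2:ℝ) := by
        apply Finset.single_le_sum (f := fun i' => ∑ j', ‖A i' j'‖ ^ (2:ℝ))
        · intro k _; positivity
        · exact Finset.mem_univ i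

lemma key (h11 h12 h21 h22 : ℝ) (h1p : 0 < h11) (h2p : 0 < h12) (h4p : 0 < h22)
    (p1 p2 : ℝ) (hp10 : 0 ≤ p1) (hp11 : p1 ≤ 1) (hp20 : 0 ≤ p2)
    (hp2s : h22 ^ 2 * (h12 ^ 2 * p2 + 1 + h11 ^ 2) ≤ h11 ^ 2 * h12 ^ 2) :
    ulLoss h11 h12 h21 h22 1 0 ≤ ulLoss h11 h12 h21 h22 p1 p2 := by
  set a := h11 ^ 2 with ha
  set b := h12 ^ 2 with hb
  set c := h21 ^ 2 with hc
  set d := h22 ^ 2 with hd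
  have hap : 0 < a := by positivity
  have hbp : 0 < b := by positivity
  have hcp : 0 ≤ c := by positivity
  have hdp : 0 < d := by positivity
  have hs1 : 0 < b * p2 + 1 := by positivity
  have hs2 : (1:ℝ) ≤ c * p1 + 1 := by nlinarith [mul_nonneg hcp hp10]
  have hu1 : (1:ℝ) ≤ 1 + a * p1 / (b * p2 + 1) := by
    have : 0 ≤ a * p1 / (b * p2 + 1) := by positivity
    linarith
  have hv1 : (1:ℝ) ≤ 1 + d * p2 / (c * p1 + 1) := by
    have : 0 ≤ d * p2 / (c * p1 + 1) := by positivity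
    linarith
  have hub : 1 + a * p1 / (b * p2 + 1) ≤ 1 + a / (b * p2 + 1) := by
    gcongr
    nlinarith
  have hvb : 1 + d * p2 / (c * p1 + 1) ≤ 1 + d * p2 := by
    have : d * p2 / (c * p1 + 1) ≤ d * p2 / 1 :=
      div_le_div_of_nonneg_left (by positivity) one_pos hs2
    simpa using this
  have hprod : (1 + a / (b * p2 + 1)) * (1 + d * p2) ≤ 1 + a := by
    have h1 : (1 + a / (b * p2 + 1)) = (b * p2 + 1 + a) / (b * p2 + 1) := by
      field_simp
    rw [h1, div_mul_eq_mul_div, div_le_iff₀ hs1]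
    nlinarith [mul_nonneg hp20 (sub_nonneg.2 hp2s)]
  have huv : (1 + a * p1 / (b * p2 + 1)) * (1 + d * p2 / (c * p1 + 1)) ≤ 1 + a :=
    le_trans (mul_le_mul hub hvb (by linarith) (by positivity)) hprod
  have hlog : Real.log (1 + a * p1 / (b * p2 + 1)) + Real.log (1 + d * p2 / (c * p1 + 1))
      ≤ Real.log (1 + a) := by
    rw [← Real.log_mul (by linarith) (by linarith)]
    exact Real.log_le_log (by nlinarith) huv
  simp only [ulLoss, mul_one, mul_zero, zero_add, zero_div, add_zero, div_one,
    Real.log_one]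
  rw [← ha, ← hb, ← hc, ← hd]
  linarith [hlog]


/-- Under the strong-interference condition, every parameter matrix `Θt` whose outputs on
both snapshots equal `(1, 0)` is a local minimum of the unsupervised training loss on the
feasible set `D = {Θ : Θ·h⁽ⁿ⁾ ∈ [0,1]²}`. -/
theorem stmt8 (h : Fin 2 → Fin 4 → ℝ)
    (hpos : ∀ n i, 0 < h n i)
    (hstrong : ∀ n, 2 * ((h n 0) ^ 2 + 2) * (h n 3) ^ 2 < (h n 0) ^ 2 * (h n 1) ^ 2)
    (Θt : Matrix (Fin 2) (Fin 4) ℝ)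
    (hΘt : Θt.mulVec (h 0) = ![1, 0] ∧ Θt.mulVec (h 1) = ![1, 0]) :
    ∃ δ > 0, ∀ Θ : Matrix (Fin 2) (Fin 4) ℝ,
      (∀ n k, 0 ≤ Θ.mulVec (h n) k ∧ Θ.mulVec (h n) k ≤ 1) →
      ‖Θ - Θt‖ ≤ δ → fUL h Θt ≤ fUL h Θ := by
  -- positivity of squared channel entries
  have ha : ∀ n : Fin 2, (0:ℝ) < (h n 0) ^ 2 := fun n => by have := hpos n 0; positivity
  have hbp : ∀ n : Fin 2, (0:ℝ) < (h n 1) ^ 2 := fun n => by have := hpos n 1; positivity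
  have hdp : ∀ n : Fin 2, (0:ℝ) < (h n 3) ^ 2 := fun n => by have := hpos n 3; positivity
  -- the per-snapshot margin
  set ε : Fin 2 → ℝ := fun n =>
    ((h n 0) ^ 2 * (h n 1) ^ 2 - (h n 3) ^ 2 * (1 + (h n 0) ^ 2))
      / ((h n 3) ^ 2 * (h n 1) ^ 2) with hε
  have hεpos : ∀ n, 0 < ε n := by
    intro n
    apply div_pos
    · nlinarith [hstrong n, hdp n]
    · exact mul_pos (hdp n) (hbp n)
  set S : Fin 2 → ℝ := fun n => h n 0 + h n 1 + h n 2 + h n 3 with hS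
  have hSpos : ∀ n, 0 < S n := by
    intro n
    have := hpos n 0; have := hpos n 1; have := hpos n 2; have := hpos n 3
    simp only [hS]; linarith
  refine ⟨min (ε 0 / S 0) (ε 1 / S 1), lt_min (div_pos (hεpos 0) (hSpos 0))
    (div_pos (hεpos 1) (hSpos 1)), ?_⟩
  intro Θ hfeas hclose
  have hnorm0 : 0 ≤ ‖Θ - Θt‖ := norm_nonneg _
  -- per-snapshot: Θ.mulVec (h n) 1 ≤ ε n
  have hp2bound : ∀ n : Fin 2, Θ.mulVec (h n) 1 ≤ ε n := by
    intro n
    have hall : Θt.mulVec (h n) = ![1, 0] := by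
      fin_cases n
      · exact hΘt.1
      · exact hΘt.2
    have htn : Θt.mulVec (h n) 1 = 0 := by rw [hall]; simp
    have hsub : Θ.mulVec (h n) 1 = (Θ - Θt).mulVec (h n) 1 := by
      rw [Matrix.sub_mulVec, Pi.sub_apply, htn, sub_zero]
    have hexp : (Θ - Θt).mulVec (h n) 1 = (Θ - Θt) 1 0 * h n 0 + (Θ - Θt) 1 1 * h n 1
        + (Θ - Θt) 1 2 * h n 2 + (Θ - Θt) 1 3 * h n 3 := by
      simp [Matrix.mulVec, dotProduct, Fin.sum_univ_four]
    have hterm : ∀ j : Fin 4, (Θ - Θt) 1 j * h n j ≤ ‖Θ - Θt‖ * h n j := by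
      intro j
      have h1 : (Θ - Θt) 1 j ≤ |(Θ - Θt) 1 j| := le_abs_self _
      have h2 : |(Θ - Θt) 1 j| ≤ ‖Θ - Θt‖ := entry_le_frob _ _ _
      exact mul_le_mul_of_nonneg_right (le_trans h1 h2) (hpos n j).le
    have hbound : Θ.mulVec (h n) 1 ≤ ‖Θ - Θt‖ * S n := by
      rw [hsub, hexp]
      have := hterm 0; have := hterm 1; have := hterm 2; have := hterm 3
      simp only [hS]; ring_nf; ring_nf at this ⊢; nlinarith [hterm 0, hterm 1, hterm 2, hterm 3]
    have hδ : ‖Θ - Θt‖ ≤ ε n / S n := by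
      refine le_trans hclose ?_
      fin_cases n
      · exact min_le_left _ _
      · exact min_le_right _ _
    calc Θ.mulVec (h n) 1 ≤ ‖Θ - Θt‖ * S n := hbound
      _ ≤ (ε n / S n) * S n := mul_le_mul_of_nonneg_right hδ (hSpos n).le
      _ = ε n := div_mul_cancel₀ _ (hSpos n).ne'
  -- per-snapshot loss inequality
  have hsnap : ∀ n : Fin 2,
      ulLoss (h n 0) (h n 1) (h n 2) (h n 3) 1 0
        ≤ ulLoss (h n 0) (h n 1) (h n 2) (h n 3) (Θ.mulVec (h n) 0) (Θ.mulVec (h n) 1) := by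
    intro n
    apply key _ _ _ _ (hpos n 0) (hpos n 1) (hpos n 3) _ _
      (hfeas n 0).1 (hfeas n 0).2 (hfeas n 1).1
    have hp2 : Θ.mulVec (h n) 1 ≤ ε n := hp2bound n
    have heq : (h n 3) ^ 2 * ((h n 1) ^ 2 * ε n + 1 + (h n 0) ^ 2)
        = (h n 0) ^ 2 * (h n 1) ^ 2 := by
      simp only [hε]
      field_simp [(hpos n 1).ne', (hpos n 3).ne']
      ring
    have hmono : (h n 3) ^ 2 * ((h n 1) ^ 2 * Θ.mulVec (h n) 1 + 1 + (h n 0) ^ 2)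
        ≤ (h n 3) ^ 2 * ((h n 1) ^ 2 * ε n + 1 + (h n 0) ^ 2) := by
      have := mul_le_mul_of_nonneg_left hp2 (hbp n).le
      nlinarith [hdp n]
    linarith [heq ▸ hmono]
  -- conclude
  have h0 := hsnap 0
  have h1 := hsnap 1
  simp only [fUL, hΘt.1, hΘt.2] at *
  simp only [Matrix.cons_val_zero, Matrix.cons_val_one, Matrix.head_cons] at *
  linarith
end

section
/- Fix K, N ≥ 1, Pmax > 0, positive weights w ∈ ℝ^K, and channel matrices h^{(1)}, …, h^{(N)} ∈ ℝ^{K×K} with positive entries. Suppose each label p̄^{(n)} ∈ [0, Pmax]^K is a KKT point of the weighted sum-rate problem max_{0 ≤ p ≤ Pmax} R(p; h^{(n)}). Let p : ℝ^d → ℝ^{N×K} be differentiable and let Θ* ∈ ℝ^d satisfy p(Θ*)_{n,k} = p̄^{(n)}_k for all n ∈ {1,…,N} and k ∈ {1,…,K}. Then Θ* is a KKT point of the unsupervised training problem: there exist multipliers λ^{(n)}_k ≥ 0 and μ^{(n)}_k ≥ 0 such that Σ_{n,k} (−∂R/∂p_k(p(Θ*)_n; h^{(n)}) − λ^{(n)}_k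 + μ^{(n)}_k)·∇_Θ p(Θ*)_{n,k} = 0, 0 ≤ p(Θ*)_{n,k} ≤ Pmax, λ^{(n)}_k·p(Θ*)_{n,k} = 0, and μ^{(n)}_k·(p(Θ*)_{n,k} − Pmax) = 0 for all n, k. -/
open Finset in
/-- Weighted sum rate `R(p; h) = Σ_k w_k log(1 + h_{kk}² p_k / (Σ_{j≠k} h_{kj}² p_j + 1))`
of a `K`-user interference channel with unit noise power. -/
noncomputable def sumRate (K : ℕ) (w : Fin K → ℝ) (h : Matrix (Fin K) (Fin K) ℝ)
    (p : Fin K → ℝ) : ℝ :=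
  ∑ k, w k * Real.log (1 + (h k k) ^ 2 * p k / ((∑ j ∈ univ.erase k, (h k j) ^ 2 * p j) + 1))

/-- Partial derivative `∂R/∂p_k` of the weighted sum rate at `p`. -/
noncomputable def dSumRate (K : ℕ) (w : Fin K → ℝ) (h : Matrix (Fin K) (Fin K) ℝ)
    (p : Fin K → ℝ) (k : Fin K) : ℝ :=
  deriv (fun t => sumRate K w h (Function.update p k t)) (p k)

/-- If every label `p̄⁽ⁿ⁾` is a KKT point of the weighted sum-rate problem
`max_{0 ≤ p ≤ Pmax} R(p; h⁽ⁿ⁾)` and the differentiable network `p(·)` achieves zero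
supervised loss at `Θs` (it outputs exactly the labels), then `Θs` is a KKT point of the
unsupervised training problem. -/
theorem stmt9 (K N d : ℕ) (hK : 1 ≤ K) (hN : 1 ≤ N)
    (Pmax : ℝ) (hPmax : 0 < Pmax)
    (w : Fin K → ℝ) (hw : ∀ k, 0 < w k)
    (h : Fin N → Matrix (Fin K) (Fin K) ℝ) (hh : ∀ n k j, 0 < h n k j)
    (pbar : Fin N → Fin K → ℝ)
    (hfeas : ∀ n k, 0 ≤ pbar n k ∧ pbar n k ≤ Pmax)
    (hKKT : ∀ n, ∃ lam mu : Fin K → ℝ, ∀ k,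
      0 ≤ lam k ∧ 0 ≤ mu k ∧
      -dSumRate K w (h n) (pbar n) k - lam k + mu k = 0 ∧
      lam k * pbar n k = 0 ∧ mu k * (pbar n k - Pmax) = 0)
    (p : (Fin d → ℝ) → Fin N → Fin K → ℝ)
    (hp : ∀ n k, Differentiable ℝ (fun Θ => p Θ n k))
    (Θs : Fin d → ℝ) (hΘs : ∀ n k, p Θs n k = pbar n k) :
    ∃ lam mu : Fin N → Fin K → ℝ,
      (∀ n k, 0 ≤ lam n k ∧ 0 ≤ mu n k) ∧
      (∑ n, ∑ k,
        (-dSumRate K w (h n) (p Θs n) k - lam n k + mu n k)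
          • fderiv ℝ (fun Θ => p Θ n k) Θs) = 0 ∧
      (∀ n k, 0 ≤ p Θs n k ∧ p Θs n k ≤ Pmax) ∧
      (∀ n k, lam n k * p Θs n k = 0) ∧
      (∀ n k, mu n k * (p Θs n k - Pmax) = 0) := by
  choose lam mu hlm using hKKT
  have hps : ∀ n, p Θs n = pbar n := fun n => funext (hΘs n)
  refine ⟨lam, mu, fun n k => ⟨(hlm n k).1, (hlm n k).2.1⟩, ?_, ?_, ?_, ?_⟩
  · refine Finset.sum_eq_zero fun n _ => Finset.sum_eq_zero fun k _ => ?_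
    have := (hlm n k).2.2.1
    rw [hps n, this, zero_smul]
  · intro n k; rw [hΘs n k]; exact hfeas n k
  · intro n k; rw [hΘs n k]; exact (hlm n k).2.2.2.1
  · intro n k; rw [hΘs n k]; exact (hlm n k).2.2.2.2
end

section
/- Fix K, N ≥ 1, Pmax > 0, positive weights w ∈ ℝ^K, channel matrices h^{(1)}, …, h^{(N)} ∈ ℝ^{K×K} with positive entries, a labeled index set M ⊆ {1,…,N}, and a regularization weight λ_reg > 0. Suppose each label p̄^{(n)} ∈ [0, Pmax]^K is a KKT point of the weighted sum-rate problem max_{0 ≤ p ≤ Pmax} R(p; h^{(n)}). Let p : ℝ^d → ℝ^{N×K} be differentiable and let Θ* ∈ ℝ^d satisfy p(Θ*)_{n,k} = p̄^{(n)}_k for all n ∈ {1,…,N} and k ∈ {1,…,K}. Then Θ* is a KKT point of the semi-supervised training problem: there exist multipliers λ^{(n)}_k ≥ 0 and μ^{(n)}_k ≥ 0 satisfying the feasibility and complementarity conditions and Σ_{n,k} (−∂R/∂p_k(p(Θ*)_n; h^{(n)}) − λ^{(n)}_k + μ^{(n)}_k)·∇_Θ p(Θ*)_{n,k} + 2·λ_reg·Σ_{m∈M,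 k} (p(Θ*)_{m,k} − p̄^{(m)}_k)·∇_Θ p(Θ*)_{m,k} = 0; moreover the supervised regularization losses vanish: Σ_k (p(Θ*)_{m,k} − p̄^{(m)}_k)² = 0 for every m ∈ M. -/
/-- If every label `p̄⁽ⁿ⁾` is a KKT point of the weighted sum-rate problem and the
differentiable network `p(·)` outputs exactly the labels at `Θs`, then `Θs` is a KKT point
of the semi-supervised training problem, and the supervised regularization losses vanish. -/
theorem stmt10 (K N d : ℕ) (hK : 1 ≤ K) (hN : 1 ≤ N)
    (Pmax : ℝ) (hPmax : 0 < Pmax)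
    (w : Fin K → ℝ) (hw : ∀ k, 0 < w k)
    (h : Fin N → Matrix (Fin K) (Fin K) ℝ) (hh : ∀ n k j, 0 < h n k j)
    (M : Finset (Fin N)) (lreg : ℝ) (hlreg : 0 < lreg)
    (pbar : Fin N → Fin K → ℝ)
    (hfeas : ∀ n k, 0 ≤ pbar n k ∧ pbar n k ≤ Pmax)
    (hKKT : ∀ n, ∃ lam mu : Fin K → ℝ, ∀ k,
      0 ≤ lam k ∧ 0 ≤ mu k ∧
      -dSumRate K w (h n) (pbar n) k - lam k + mu k = 0 ∧
      lam k * pbar n k = 0 ∧ mu k * (pbar n k - Pmax) = 0)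
    (p : (Fin d → ℝ) → Fin N → Fin K → ℝ)
    (hp : ∀ n k, Differentiable ℝ (fun Θ => p Θ n k))
    (Θs : Fin d → ℝ) (hΘs : ∀ n k, p Θs n k = pbar n k) :
    ∃ lam mu : Fin N → Fin K → ℝ,
      (∀ n k, 0 ≤ lam n k ∧ 0 ≤ mu n k) ∧
      ((∑ n, ∑ k,
        (-dSumRate K w (h n) (p Θs n) k - lam n k + mu n k)
          • fderiv ℝ (fun Θ => p Θ n k) Θs)
        + (2 * lreg) • (∑ m ∈ M, ∑ k,
            (p Θs m k - pbar m k) • fderiv ℝ (fun Θ => p Θ m k) Θs)) = 0 ∧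
      (∀ n k, 0 ≤ p Θs n k ∧ p Θs n k ≤ Pmax) ∧
      (∀ n k, lam n k * p Θs n k = 0) ∧
      (∀ n k, mu n k * (p Θs n k - Pmax) = 0) ∧
      (∀ m ∈ M, ∑ k, (p Θs m k - pbar m k) ^ 2 = 0) := by

  choose lam mu hlm using hKKT
  have hps : ∀ n, p Θs n = pbar n := fun n => funext (hΘs n)
  refine ⟨lam, mu, fun n k => ⟨(hlm n k).1, (hlm n k).2.1⟩, ?_, ?_, ?_, ?_, ?_⟩
  · have h1 : ∀ n k, (-dSumRate K w (h n) (p Θs n) k - lam n k + mu n k)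
        • fderiv ℝ (fun Θ => p Θ n k) Θs = 0 := by
      intro n k
      rw [hps n, (hlm n k).2.2.1, zero_smul]
    have h2 : ∀ (m : Fin N) (k : Fin K), (p Θs m k - pbar m k)
        • fderiv ℝ (fun Θ => p Θ m k) Θs = 0 := by
      intro m k
      rw [hΘs m k, sub_self, zero_smul]
    simp only [h1, h2, Finset.sum_const_zero, smul_zero, add_zero]
  · intro n k; rw [hΘs n k]; exact hfeas n k
  · intro n k; rw [hΘs n k]; exact (hlm n k).2.2.2.1
  · intro n k; rw [hΘs n k]; exact (hlm n k).2.2.2.2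
  · intro m _; simp [hΘs m]
end

section
/- Fix K, N ≥ 1, Pmax > 0, positive weights w ∈ ℝ^K, channel matrices h^{(1)}, …, h^{(N)} ∈ ℝ^{K×K} with positive entries, labels p̄^{(m)} ∈ [0, Pmax]^K for m in a labeled index set M ⊆ {1,…,N}, a regularization weight λ_reg > 0, and a differentiable map p : ℝ^d → ℝ^{N×K}. Suppose Θ̃ ∈ ℝ^d together with multipliers λ^{(n)}_k ≥ 0, μ^{(n)}_k ≥ 0 satisfies the KKT conditions of the semi-supervised training problem (stationarity of its Lagrangian, feasibility 0 ≤ p(Θ̃)_{n,k} ≤ Pmax, and complementarity λ^{(n)}_k·p(Θ̃)_{n,k} = 0, μ^{(n)}_k·(p(Θ̃)_{n,k} − Pmax) = 0), and that the regularization losses vanish: p(Θ̃)_{m,k} = p̄^{(m)}_k for all m ∈ M and all k. Then Θ̃ with the same multipliers satisfies the KKT conditions of the unsupervised training problem: Σ_{n,k} (−∂R/∂p_k(p(Θ̃)_n; h^{(n)}) − λ^{(n)}_k + μ^{(n)}_k)·∇_Θ p(Θ̃)_{n,k} = 0 together with the same feasibility and complementarity conditions. -/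
/-- A KKT point of the semi-supervised training problem whose supervised regularization
losses vanish is, with the same multipliers, a KKT point of the unsupervised training
problem. -/
theorem stmt11 (K N d : ℕ) (hK : 1 ≤ K) (hN : 1 ≤ N)
    (Pmax : ℝ) (hPmax : 0 < Pmax)
    (w : Fin K → ℝ) (hw : ∀ k, 0 < w k)
    (h : Fin N → Matrix (Fin K) (Fin K) ℝ) (hh : ∀ n k j, 0 < h n k j)
    (M : Finset (Fin N)) (lreg : ℝ) (hlreg : 0 < lreg)
    (pbar : Fin N → Fin K → ℝ)
    (hlabfeas : ∀ m ∈ M, ∀ k, 0 ≤ pbar m k ∧ pbar m k ≤ Pmax)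
    (p : (Fin d → ℝ) → Fin N → Fin K → ℝ)
    (hp : ∀ n k, Differentiable ℝ (fun Θ => p Θ n k))
    (Θt : Fin d → ℝ) (lam mu : Fin N → Fin K → ℝ)
    (hnonneg : ∀ n k, 0 ≤ lam n k ∧ 0 ≤ mu n k)
    (hstat : ((∑ n, ∑ k,
        (-dSumRate K w (h n) (p Θt n) k - lam n k + mu n k)
          • fderiv ℝ (fun Θ => p Θ n k) Θt)
        + (2 * lreg) • (∑ m ∈ M, ∑ k,
            (p Θt m k - pbar m k) • fderiv ℝ (fun Θ => p Θ m k) Θt)) = 0)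
    (hfeas : ∀ n k, 0 ≤ p Θt n k ∧ p Θt n k ≤ Pmax)
    (hcompl : ∀ n k, lam n k * p Θt n k = 0)
    (hcompu : ∀ n k, mu n k * (p Θt n k - Pmax) = 0)
    (hzero : ∀ m ∈ M, ∀ k, p Θt m k = pbar m k) :
    (∑ n, ∑ k,
        (-dSumRate K w (h n) (p Θt n) k - lam n k + mu n k)
          • fderiv ℝ (fun Θ => p Θ n k) Θt) = 0 ∧
    (∀ n k, 0 ≤ p Θt n k ∧ p Θt n k ≤ Pmax) ∧
    (∀ n k, lam n k * p Θt n k = 0) ∧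
    (∀ n k, mu n k * (p Θt n k - Pmax) = 0) := by
  refine ⟨?_, hfeas, hcompl, hcompu⟩
  have hreg : (∑ m ∈ M, ∑ k,
      (p Θt m k - pbar m k) • fderiv ℝ (fun Θ => p Θ m k) Θt) = 0 := by
    refine Finset.sum_eq_zero fun m hm => Finset.sum_eq_zero fun k _ => ?_
    rw [hzero m hm k, sub_self, zero_smul]
  rw [hreg, smul_zero, add_zero] at hstat
  exact hstat
end

section
/- For any α > 0 and Pmax > 0, the smoothed clipped ReLU b : ℝ → ℝ is differentiable on all of ℝ with derivative b'(x) = exp(x/α) for x < 0, b'(x) = 1 for 0 ≤ x ≤ Pmax, and b'(x) = exp((Pmax − x)/α) for x > Pmax; consequently 0 < b'(x) ≤ 1 for all x ∈ ℝ, b is strictly increasing, and −α < b(x) < Pmax + α for all x ∈ ℝ. -/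
/-- The smoothed clipped ReLU with parameters `α > 0` and `Pmax > 0`. -/
noncomputable def screlu (α Pmax x : ℝ) : ℝ :=
  if x < 0 then α * (Real.exp (x / α) - 1)
  else if x ≤ Pmax then x
  else Pmax + α * (1 - Real.exp ((Pmax - x) / α))

/-- The claimed derivative of the smoothed clipped ReLU. -/
noncomputable def screlu' (α Pmax x : ℝ) : ℝ :=
  if x < 0 then Real.exp (x / α)
  else if x ≤ Pmax then 1
  else Real.exp ((Pmax - x) / α)

lemma screlu_left_deriv (α : ℝ) (hα : 0 < α) (x : ℝ) :
    HasDerivAt (fun x => α * (Real.exp (x / α) - 1)) (Real.exp (x / α)) x := by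
  have h1 : HasDerivAt (fun x : ℝ => x / α) (1 / α) x := (hasDerivAt_id x).div_const α
  have h2 : HasDerivAt (fun x : ℝ => Real.exp (x / α)) (Real.exp (x / α) * (1 / α)) x :=
    h1.exp
  have h3 := ((h2.sub_const 1).const_mul α)
  convert h3 using 1
  · rfl
  · rfl
  · field_simp

lemma screlu_right_deriv (α Pmax : ℝ) (hα : 0 < α) (x : ℝ) :
    HasDerivAt (fun x => Pmax + α * (1 - Real.exp ((Pmax - x) / α)))
      (Real.exp ((Pmax - x) / α)) x := by
  have h1 : HasDerivAt (fun x : ℝ => (Pmax - x) / α) (-1 / α) x := by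
    have := ((hasDerivAt_id x).const_sub Pmax).div_const α
    simpa using this
  have h2 : HasDerivAt (fun x : ℝ => Real.exp ((Pmax - x) / α))
      (Real.exp ((Pmax - x) / α) * (-1 / α)) x :=
    h1.exp
  have h3 := (((h2.const_sub 1).const_mul α).const_add Pmax)
  convert h3 using 1
  · rfl
  · rfl
  · field_simp

lemma screlu_hasDerivAt (α Pmax : ℝ) (hα : 0 < α) (hPmax : 0 < Pmax) (x : ℝ) :
    HasDerivAt (screlu α Pmax) (screlu' α Pmax x) x := by
  have hL := screlu_left_deriv α hα
  have hR := screlu_right_deriv α Pmax hα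
  have hmid : ∀ y : ℝ, 0 ≤ y → y ≤ Pmax → screlu α Pmax y = y := by
    intro y h1 h2
    simp [screlu, not_lt.2 h1, h2]
  have hleft : ∀ y : ℝ, y ≤ 0 → screlu α Pmax y = α * (Real.exp (y / α) - 1) := by
    intro y hy
    rcases lt_or_eq_of_le hy with h | h
    · simp [screlu, h]
    · subst h; simp [screlu, hPmax.le]
  have hright : ∀ y : ℝ, Pmax ≤ y →
      screlu α Pmax y = Pmax + α * (1 - Real.exp ((Pmax - y) / α)) := by
    intro y hy
    rcases lt_or_eq_of_le hy with h | h
    · simp [screlu, not_lt.2 (le_of_lt (lt_of_le_of_lt hPmax.le h)), not_le.2 h]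
    · rw [← h]
      simp [screlu, not_lt.2 hPmax.le]
  rcases lt_trichotomy x 0 with hx | hx | hx
  · -- x < 0 : eventually equal to left formula
    have heq : screlu α Pmax =ᶠ[nhds x] fun y => α * (Real.exp (y / α) - 1) := by
      filter_upwards [Iio_mem_nhds hx] with y hy
      exact hleft y (le_of_lt hy)
    have : screlu' α Pmax x = Real.exp (x / α) := by simp [screlu', hx]
    rw [this]
    exact (hL x).congr_of_eventuallyEq heq
  · -- x = 0 : glue
    subst hx
    have hd : screlu' α Pmax 0 = 1 := by simp [screlu', hPmax.le]
    rw [hd]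
    rw [← hasDerivWithinAt_univ, ← Set.Iic_union_Ici (a := (0:ℝ))]
    apply HasDerivWithinAt.union
    · have : HasDerivWithinAt (fun y => α * (Real.exp (y / α) - 1)) 1 (Set.Iic 0) 0 := by
        have := (hL 0).hasDerivWithinAt (s := Set.Iic 0)
        simpa using this
      exact this.congr (fun y hy => hleft y hy) (hleft 0 le_rfl)
    · have h0 : HasDerivWithinAt (fun y : ℝ => y) 1 (Set.Ici 0) 0 :=
        (hasDerivAt_id 0).hasDerivWithinAt
      apply h0.congr_of_eventuallyEq ?_ (hmid 0 le_rfl hPmax.le)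
      filter_upwards [Icc_mem_nhdsGE_of_mem ⟨le_rfl, hPmax⟩] with y hy
      exact hmid y hy.1 hy.2
  · rcases lt_trichotomy x Pmax with hx2 | hx2 | hx2
    · -- 0 < x < Pmax
      have heq : screlu α Pmax =ᶠ[nhds x] fun y : ℝ => y := by
        filter_upwards [Ioo_mem_nhds hx hx2] with y hy
        exact hmid y hy.1.le hy.2.le
      have : screlu' α Pmax x = 1 := by simp [screlu', not_lt.2 hx.le, hx2.le]
      rw [this]
      exact (hasDerivAt_id x).congr_of_eventuallyEq heq
    · -- x = Pmax
      rw [hx2]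
      have hd : screlu' α Pmax Pmax = 1 := by simp [screlu', not_lt.2 hPmax.le]
      rw [hd]
      rw [← hasDerivWithinAt_univ, ← Set.Iic_union_Ici (a := Pmax)]
      apply HasDerivWithinAt.union
      · have h0 : HasDerivWithinAt (fun y : ℝ => y) 1 (Set.Iic Pmax) Pmax :=
          (hasDerivAt_id Pmax).hasDerivWithinAt
        apply h0.congr_of_eventuallyEq ?_ (hmid Pmax hPmax.le le_rfl)
        filter_upwards [Icc_mem_nhdsLE_of_mem ⟨hPmax, le_rfl⟩] with y hy
        exact hmid y hy.1 hy.2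
      · have h0 : HasDerivWithinAt (fun y => Pmax + α * (1 - Real.exp ((Pmax - y) / α)))
            1 (Set.Ici Pmax) Pmax := by
          have := (hR Pmax).hasDerivWithinAt (s := Set.Ici Pmax)
          simpa using this
        exact h0.congr (fun y hy => hright y hy) (hright Pmax le_rfl)
    · -- Pmax < x
      have heq : screlu α Pmax =ᶠ[nhds x]
          fun y => Pmax + α * (1 - Real.exp ((Pmax - y) / α)) := by
        filter_upwards [Ioi_mem_nhds hx2] with y hy
        exact hright y hy.le
      have : screlu' α Pmax x = Real.exp ((Pmax - x) / α) := by
        simp [screlu', not_lt.2 (le_of_lt (lt_of_le_of_lt hPmax.le hx2)), not_le.2 hx2]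
      rw [this]
      exact (hR x).congr_of_eventuallyEq heq

/-- The smoothed clipped ReLU is differentiable everywhere with the claimed piecewise
derivative; its derivative lies in `(0, 1]`, it is strictly increasing, and its values lie
in `(−α, Pmax + α)`. -/
theorem stmt12 (α Pmax : ℝ) (hα : 0 < α) (hPmax : 0 < Pmax) :
    (∀ x, HasDerivAt (screlu α Pmax) (screlu' α Pmax x) x) ∧
    (∀ x, 0 < screlu' α Pmax x ∧ screlu' α Pmax x ≤ 1) ∧
    StrictMono (screlu α Pmax) ∧
    (∀ x, -α < screlu α Pmax x ∧ screlu α Pmax x < Pmax + α) := by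
  have hderiv := screlu_hasDerivAt α Pmax hα hPmax
  have hbound : ∀ x, 0 < screlu' α Pmax x ∧ screlu' α Pmax x ≤ 1 := by
    intro x
    unfold screlu'
    split_ifs with h1 h2
    · exact ⟨Real.exp_pos _, Real.exp_le_one_iff.2 (div_nonpos_iff.2 (Or.inr ⟨h1.le, hα.le⟩))⟩
    · exact ⟨one_pos, le_rfl⟩
    · refine ⟨Real.exp_pos _, Real.exp_le_one_iff.2 ?_⟩
      apply div_nonpos_iff.2
      refine Or.inr ⟨by linarith [not_le.1 h2], hα.le⟩
  refine ⟨hderiv, hbound, ?_, ?_⟩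
  · apply strictMono_of_deriv_pos
    intro x
    rw [(hderiv x).deriv]
    exact (hbound x).1
  · intro x
    unfold screlu
    split_ifs with h1 h2
    · have he : Real.exp (x / α) < 1 :=
        Real.exp_lt_one_iff.2 (div_neg_of_neg_of_pos h1 hα)
      have hp : 0 < Real.exp (x / α) := Real.exp_pos _
      constructor <;> nlinarith
    · constructor <;> linarith [not_lt.1 h1]
    · have he : Real.exp ((Pmax - x) / α) < 1 := by
        apply Real.exp_lt_one_iff.2
        apply div_neg_of_neg_of_pos _ hα
        linarith [not_le.1 h2]
      have hp : 0 < Real.exp ((Pmax - x) / α) := Real.exp_pos _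
      constructor <;> nlinarith
end
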